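/- Let $G$ be a compact Vilenkin group satisfying Condition (A), let $1 < p \leq 2$, $1/p + 1/q = 1$, and $0 < \alpha \leq 1$. If $f \in Lip_{\mathscr{G}}(\alpha; p)$, then $\Big(\sum_{\langle \xi \rangle_{\mathscr{G}} > |G/G_k|} d_\xi^{q(2/q - 1/2)} \|\widehat{f}(\xi)\|_{HS}^q\Big)^{1/q} = \mathcal{O}(|G/G_k|^{-\alpha})$ as $k \to \infty$. -/

import Mathlib

open MeasureTheory Filter Asymptotics

noncomputable section

/-- The Hilbert–Schmidt (Frobenius) norm of a complex square matrix. -/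
def hsNorm {n : ℕ} (M : Matrix (Fin n) (Fin n) ℂ) : ℝ :=
  Real.sqrt (∑ i, ∑ j, ‖M i j‖ ^ 2)

/-- Irreducibility of a unitary representation, via Schur's commutant criterion. -/
def IsIrreducibleRep {G : Type*} [Group G] {n : ℕ}
    (ξ : G →* Matrix.unitaryGroup (Fin n) ℂ) : Prop :=
  ∀ M : Matrix (Fin n) (Fin n) ℂ,
    (∀ x : G, M * (ξ x : Matrix (Fin n) (Fin n) ℂ) = (ξ x : Matrix (Fin n) (Fin n) ℂ) * M) →
      ∃ c : ℂ, M = c • (1 : Matrix (Fin n) (Fin n) ℂ)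

/-- The Fourier coefficient `f̂(ξ) = ∫_G f(x) ξ(x)* dμ(x)` of `f` at a unitary
representation `ξ`. -/
def fourierCoef {G : Type*} [Group G] [TopologicalSpace G] [MeasurableSpace G]
    (μ : Measure G) (f : G → ℂ) {n : ℕ}
    (ξ : G →* Matrix.unitaryGroup (Fin n) ℂ) : Matrix (Fin n) (Fin n) ℂ :=
  Matrix.of fun i j => ∫ x, f x * (starRingEnd ℂ) ((ξ x : Matrix (Fin n) (Fin n) ℂ) j i) ∂μ

/-- A compact Vilenkin group structure on a profinite group `G`: a strictly decreasing
sequence of open subgroups starting at `G`, forming a neighbourhood basis of the identity,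
with finite indices and `2 ≤ |G_n/G_{n+1}|`. -/
structure VilenkinData (G : Type*) [Group G] [TopologicalSpace G] where
  seq : ℕ → Subgroup G
  top_eq : seq 0 = ⊤
  isOpen : ∀ n, IsOpen (seq n : Set G)
  strictAnti : StrictAnti seq
  basis : (nhds (1 : G)).HasBasis (fun _ : ℕ => True) fun n => (seq n : Set G)
  index_ne_zero : ∀ n, (seq n).index ≠ 0
  two_le_relindex : ∀ n, 2 ≤ (seq (n + 1)).relIndex (seq n)
/-- Data for the unitary dual `Ĝ` of a compact Vilenkin group `G`: a family of pairwise
inequivalent continuous irreducible unitary representations indexed by `ι`, with dimensions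
`dim`, levels `lvl` (so `⟨ξ_i⟩ = |G/G_{lvl i}|`), satisfying the Plancherel identity and the
Peter–Weyl counting identity. -/
structure DualData (G : Type*) [Group G] [TopologicalSpace G] [MeasurableSpace G]
    (V : VilenkinData G) (μ : Measure G) where
  ι : Type
  dim : ι → ℕ
  dim_pos : ∀ i, 0 < dim i
  lvl : ι → ℕ
  rep : ∀ i, G →* Matrix.unitaryGroup (Fin (dim i)) ℂ
  rep_continuous : ∀ i, Continuous fun x => ((rep i) x : Matrix (Fin (dim i)) (Fin (dim i)) ℂ)
  rep_irr : ∀ i, IsIrreducibleRep (rep i)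
  lvl_triv : ∀ i, ∀ x ∈ V.seq (lvl i), rep i x = 1
  lvl_min : ∀ i, 0 < lvl i → ∃ x ∈ V.seq (lvl i - 1), rep i x ≠ 1
  plancherel : ∀ f : G → ℂ, MemLp f 2 μ →
    ∫ x, ‖f x‖ ^ 2 ∂μ = ∑' i, (dim i : ℝ) * hsNorm (fourierCoef μ f (rep i)) ^ 2
  count : ∀ n, HasSum (fun i : {i // lvl i ≤ n} => ((dim i.1 : ℝ)) ^ 2) ((V.seq n).index : ℝ)

/-!
Fix `k` and finitely many `ξ` with `k < lvl ξ ≤ M`, and let `g` be the average of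
`f - f(r ·)` over representatives `r` of the cosets of `G_M` in `G_k`. The matrix
`∑_r ξ(r)` is fixed by right multiplication by `ξ(G_k)`, which Condition (A) allows only
for `0`; hence `ĝ(ξ) = f̂(ξ)`, while `‖g‖_p ≤ sup_{h ∈ G_k} ‖f(h ·) - f‖_p = O(|G/G_k|^{-α})`.
Hausdorff–Young for `g` then bounds every finite part of the tail sum by `‖g‖_p^q`.
-/

open scoped ENNReal ComplexConjugate

section HilbertSchmidt

variable {n : ℕ}

lemma hsNorm_nonneg (M : Matrix (Fin n) (Fin n) ℂ) : 0 ≤ hsNorm M :=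
  Real.sqrt_nonneg _

@[simp]
lemma hsNorm_eq_zero_iff {M : Matrix (Fin n) (Fin n) ℂ} : hsNorm M = 0 ↔ M = 0 := by
  have hsum : 0 ≤ ∑ i, ∑ j, ‖M i j‖ ^ 2 := by positivity
  rw [hsNorm, Real.sqrt_eq_zero hsum, Finset.sum_eq_zero_iff_of_nonneg (fun _ _ => by positivity)]
  simp only [Finset.mem_univ, forall_const, sq_eq_zero_iff, norm_eq_zero,
    Finset.sum_eq_zero_iff_of_nonneg fun _ _ => sq_nonneg _]
  exact ⟨Matrix.ext, by rintro rfl; simp⟩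

lemma eq_zero_of_mul_eq_self_of_le_sum_hsNorm_mul_sub_one {ι : Type*} [Fintype ι]
    {P : Matrix (Fin n) (Fin n) ℂ} {U : ι → Matrix (Fin n) (Fin n) ℂ} {a c q : ℝ}
    (ha : 0 < a) (hq : 0 < q) (hle : a * hsNorm P ^ q ≤ c * ∑ i, hsNorm (P * (U i - 1)) ^ q)
    (hP : ∀ i, P * U i = P) : P = 0 := by
  simp only [mul_sub, mul_one, hP, sub_self, (hsNorm_eq_zero_iff).mpr, Real.zero_rpow hq.ne',
    Finset.sum_const_zero, mul_zero] at hle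
  have hpow : hsNorm P ^ q = 0 :=
    le_antisymm (nonpos_of_mul_nonpos_right hle ha) (Real.rpow_nonneg (hsNorm_nonneg P) q)
  exact hsNorm_eq_zero_iff.mp ((Real.rpow_eq_zero (hsNorm_nonneg P) hq.ne').mp hpow)

end HilbertSchmidt

/-- Inverses of left coset representatives of `H` in `K` form a right transversal, which right
multiplication by `h ∈ K` permutes modulo `H`. -/
lemma sum_quotient_out_inv_mul_eq {G M : Type*} [Group G] [AddCommMonoid M] {H K : Subgroup G}
    [Fintype (K ⧸ H.subgroupOf K)] (φ : G → M) (hφ : ∀ a ∈ H, ∀ x, φ (a * x) = φ x)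
    {h : G} (hh : h ∈ K) :
    ∑ y : K ⧸ H.subgroupOf K, φ ((y.out : G)⁻¹ * h) =
      ∑ y : K ⧸ H.subgroupOf K, φ (y.out : G)⁻¹ := by
  let k : K := ⟨h, hh⟩
  refine Eq.trans (Finset.sum_congr rfl fun y _ => ?_)
    (Equiv.sum_comp (MulAction.toPerm k⁻¹) fun y : K ⧸ H.subgroupOf K => φ (y.out : G)⁻¹)
  obtain ⟨a, ha⟩ := QuotientGroup.mk_out_eq_mul (H.subgroupOf K) (k⁻¹ * y.out)
  have hy : MulAction.toPerm k⁻¹ y = ((k⁻¹ * y.out : K) : K ⧸ H.subgroupOf K) := by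
    conv_lhs => rw [← QuotientGroup.out_eq' y]
    rfl
  rw [hy, ha]
  simp only [Subgroup.coe_mul, Subgroup.coe_inv, mul_inv_rev, inv_inv, mul_assoc]
  exact (hφ _ (inv_mem (Subgroup.mem_subgroupOf.mp a.2)) _).symm

section Fourier

variable {G : Type*} [Group G] [TopologicalSpace G] [MeasurableSpace G] {μ : Measure G}
  {n : ℕ} {ξ : G →* Matrix.unitaryGroup (Fin n) ℂ}

lemma fourierCoef_apply (f : G → ℂ) (i j : Fin n) :
    fourierCoef μ f ξ i j = ∫ x, f x * conj ((ξ x : Matrix (Fin n) (Fin n) ℂ) j i) ∂μ :=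
  rfl

lemma integrable_mul_conj_rep_apply [OpensMeasurableSpace G]
    (hξ : Continuous fun x => (ξ x : Matrix (Fin n) (Fin n) ℂ)) {f : G → ℂ}
    (hf : Integrable f μ) (i j : Fin n) :
    Integrable (fun x => f x * conj ((ξ x : Matrix (Fin n) (Fin n) ℂ) j i)) μ :=
  hf.mul_bdd (continuous_star.comp (hξ.matrix_elem j i)).aestronglyMeasurable
    (Filter.Eventually.of_forall fun x => by
      simpa using entry_norm_bound_of_unitary (ξ x).2 j i)

lemma fourierCoef_smul (c : ℂ) (f : G → ℂ) :
    fourierCoef μ (c • f) ξ = c • fourierCoef μ f ξ := by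
  ext i j
  simp only [fourierCoef_apply, Pi.smul_apply, smul_eq_mul, Matrix.smul_apply, mul_assoc,
    integral_const_mul]

variable [OpensMeasurableSpace G] (hξ : Continuous fun x => (ξ x : Matrix (Fin n) (Fin n) ℂ))
include hξ

lemma fourierCoef_sub {f g : G → ℂ} (hf : Integrable f μ) (hg : Integrable g μ) :
    fourierCoef μ (f - g) ξ = fourierCoef μ f ξ - fourierCoef μ g ξ := by
  ext i j
  simp only [fourierCoef_apply, Pi.sub_apply, sub_mul, Matrix.sub_apply]
  exact integral_sub (integrable_mul_conj_rep_apply hξ hf i j)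
    (integrable_mul_conj_rep_apply hξ hg i j)

lemma fourierCoef_sum {ι : Type*} (s : Finset ι) {F : ι → G → ℂ}
    (hF : ∀ k ∈ s, Integrable (F k) μ) :
    fourierCoef μ (∑ k ∈ s, F k) ξ = ∑ k ∈ s, fourierCoef μ (F k) ξ := by
  ext i j
  simp only [fourierCoef_apply, Finset.sum_apply, Finset.sum_mul, Matrix.sum_apply]
  exact integral_finsetSum s fun k hk => integrable_mul_conj_rep_apply hξ (hF k hk) i j

lemma fourierCoef_comp_mul_left [MeasurableMul G] [μ.IsMulLeftInvariant] {f : G → ℂ}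
    (hf : Integrable f μ) (c : G) :
    fourierCoef μ (fun x => f (c * x)) ξ =
      fourierCoef μ f ξ * (ξ c : Matrix (Fin n) (Fin n) ℂ) := by
  ext i j
  have hconj : ∀ x, conj ((ξ (c⁻¹ * x) : Matrix (Fin n) (Fin n) ℂ) j i) =
      ∑ l, (ξ c : Matrix (Fin n) (Fin n) ℂ) l j * conj ((ξ x : Matrix (Fin n) (Fin n) ℂ) l i) := by
    simp [Matrix.mul_apply, Matrix.star_apply]
  calc fourierCoef μ (fun x => f (c * x)) ξ i j
      = ∫ x, f x * conj ((ξ (c⁻¹ * x) : Matrix (Fin n) (Fin n) ℂ) j i) ∂μ := by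
        rw [fourierCoef_apply, ← integral_mul_left_eq_self _ c⁻¹]
        simp
    _ = ∑ l, (ξ c : Matrix (Fin n) (Fin n) ℂ) l j * fourierCoef μ f ξ i l := by
        simp only [hconj, Finset.mul_sum, fourierCoef_apply, ← integral_const_mul]
        rw [← integral_finsetSum _ fun l _ =>
          (integrable_mul_conj_rep_apply hξ hf i l).const_mul _]
        congr 1 with x
        exact Finset.sum_congr rfl fun l _ => by ring
    _ = (fourierCoef μ f ξ * (ξ c : Matrix (Fin n) (Fin n) ℂ)) i j := by
        simp only [Matrix.mul_apply, mul_comm]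

end Fourier

lemma eLpNorm_inv_card_smul_sum_le {α E 𝕜 ι : Type*} [MeasurableSpace α] {μ : Measure α}
    [NormedAddCommGroup E] [RCLike 𝕜] [NormedSpace 𝕜 E] {p : ℝ≥0∞} (hp : 1 ≤ p)
    (s : Finset ι) {F : ι → α → E} (hF : ∀ i ∈ s, AEStronglyMeasurable (F i) μ) {B : ℝ≥0∞}
    (hB : ∀ i ∈ s, eLpNorm (F i) p μ ≤ B) :
    eLpNorm ((s.card : 𝕜)⁻¹ • ∑ i ∈ s, F i) p μ ≤ B := by
  rw [eLpNorm_const_smul]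
  rcases s.eq_empty_or_nonempty with rfl | hs
  · simp
  calc ‖(s.card : 𝕜)⁻¹‖ₑ * eLpNorm (∑ i ∈ s, F i) p μ
      ≤ ‖(s.card : 𝕜)⁻¹‖ₑ * ∑ i ∈ s, B :=
        mul_le_mul_right ((eLpNorm_sum_le hF hp).trans (Finset.sum_le_sum hB)) _
    _ = B := by
        rw [Finset.sum_const, nsmul_eq_mul, ← mul_assoc, enorm_inv (by simp [hs.ne_empty]),
          ← ofReal_norm, RCLike.norm_natCast, ENNReal.ofReal_natCast,
          ENNReal.inv_mul_cancel (by simp [hs.ne_empty]) (ENNReal.natCast_ne_top _), one_mul]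

theorem exists_memLp_eLpNorm_le_fourierCoef_eq {G : Type*} [Group G] [TopologicalSpace G]
    [IsTopologicalGroup G] [MeasurableSpace G] [BorelSpace G] {μ : Measure G}
    [μ.IsMulLeftInvariant] [IsFiniteMeasure μ] {H K : Subgroup G} [H.IsFiniteRelIndex K]
    {p : ℝ≥0∞} (hp : 1 ≤ p) {f : G → ℂ} (hf : MemLp f p μ) {B : ℝ≥0∞}
    (hB : ∀ h ∈ K, eLpNorm (fun x => f (h * x) - f x) p μ ≤ B) :
    ∃ g : G → ℂ, MemLp g p μ ∧ eLpNorm g p μ ≤ B ∧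
      ∀ {n : ℕ} (ξ : G →* Matrix.unitaryGroup (Fin n) ℂ),
        Continuous (fun x => (ξ x : Matrix (Fin n) (Fin n) ℂ)) → (∀ x ∈ H, ξ x = 1) →
        (∀ P : Matrix (Fin n) (Fin n) ℂ, (∀ h ∈ K, P * ξ h = P) → P = 0) →
        fourierCoef μ g ξ = fourierCoef μ f ξ := by
  let Q := K ⧸ H.subgroupOf K
  have : Fintype Q := Fintype.ofFinite Q
  let r : Q → G := fun y => (y.out : G)⁻¹
  have hrK : ∀ y, r y ∈ K := fun y => inv_mem y.out.2
  let D : Q → G → ℂ := fun y => f - fun x => f (r y * x)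
  have hfr : ∀ y, MemLp (fun x => f (r y * x)) p μ := fun y =>
    hf.comp_measurePreserving (measurePreserving_mul_left μ (r y))
  have hD : ∀ y, MemLp (D y) p μ := fun y => hf.sub (hfr y)
  refine ⟨(Finset.univ.card : ℂ)⁻¹ • ∑ y, D y,
    (memLp_finsetSum' _ fun y _ => hD y).const_smul _,
    eLpNorm_inv_card_smul_sum_le hp _ (fun y _ => (hD y).1) fun y _ => ?_,
    fun {n} ξ hξ hH hK => ?_⟩
  · rw [eLpNorm_sub_comm]
    exact hB _ (hrK y)
  have hfi := hf.integrable hp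
  have hsum : ∑ y, (ξ (r y) : Matrix (Fin n) (Fin n) ℂ) = 0 := hK _ fun h hh => by
    rw [Finset.sum_mul]
    simpa only [map_mul, Submonoid.coe_mul] using
      sum_quotient_out_inv_mul_eq (H := H) (fun x => (ξ x : Matrix (Fin n) (Fin n) ℂ))
        (fun a ha x => by simp [hH a ha]) hh
  rw [fourierCoef_smul, fourierCoef_sum hξ _ fun y _ => (hD y).integrable hp]
  simp only [D, fourierCoef_sub hξ hfi ((hfr _).integrable hp),
    fourierCoef_comp_mul_left hξ hfi, Finset.sum_sub_distrib, ← Finset.mul_sum, hsum, mul_zero,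
    sub_zero, Finset.sum_const, ← Nat.cast_smul_eq_nsmul ℂ, smul_smul]
  rw [inv_mul_cancel₀ (by simp), one_smul]

namespace VilenkinData

variable {G : Type*} [Group G] [TopologicalSpace G] (V : VilenkinData G)

instance finiteIndex_seq (n : ℕ) : (V.seq n).FiniteIndex :=
  ⟨V.index_ne_zero n⟩

lemma index_seq_pos (n : ℕ) : 0 < ((V.seq n).index : ℝ) :=
  Nat.cast_pos.mpr (Nat.pos_of_ne_zero (V.index_ne_zero n))

end VilenkinData

namespace DualData

variable {G : Type*} [Group G] [TopologicalSpace G] [MeasurableSpace G] {V : VilenkinData G}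
  {μ : Measure G} (D : DualData G V μ)

lemma rep_eq_one_of_lvl_le {j : D.ι} {m : ℕ} (hj : D.lvl j ≤ m) {x : G} (hx : x ∈ V.seq m) :
    D.rep j x = 1 :=
  D.lvl_triv j x (V.strictAnti.antitone hj hx)

lemma eq_zero_of_forall_mul_rep_eq_self {k nn : ℕ} {h : Fin nn → G} (hh : ∀ i, h i ∈ V.seq k)
    {q C : ℝ} (hq : 0 < q)
    (hA : ∀ j : D.ι, k < D.lvl j → ∀ A : Matrix (Fin (D.dim j)) (Fin (D.dim j)) ℂ,
      ((V.seq k).index : ℝ) ^ q * ((V.seq (D.lvl j)).index : ℝ) ^ (-q) * hsNorm A ^ q ≤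
        C * ∑ i, hsNorm (A * ((D.rep j (h i) : Matrix (Fin (D.dim j)) (Fin (D.dim j)) ℂ) - 1)) ^ q)
    {j : D.ι} (hj : k < D.lvl j) {P : Matrix (Fin (D.dim j)) (Fin (D.dim j)) ℂ}
    (hP : ∀ x ∈ V.seq k, P * D.rep j x = P) : P = 0 :=
  eq_zero_of_mul_eq_self_of_le_sum_hsNorm_mul_sub_one
    (mul_pos (Real.rpow_pos_of_pos (V.index_seq_pos _) _)
      (Real.rpow_pos_of_pos (V.index_seq_pos _) _))
    hq (hA j hj P) fun i => hP _ (hh i)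

theorem exists_memLp_eLpNorm_le_fourierCoef_eq_of_lvl_le [IsTopologicalGroup G] [BorelSpace G]
    [μ.IsMulLeftInvariant] [IsFiniteMeasure μ] {p : ℝ≥0∞} (hp : 1 ≤ p) {f : G → ℂ}
    (hf : MemLp f p μ) {k : ℕ} {B : ℝ≥0∞}
    (hB : ∀ h ∈ V.seq k, eLpNorm (fun x => f (h * x) - f x) p μ ≤ B)
    (hfix : ∀ j, k < D.lvl j → ∀ P : Matrix (Fin (D.dim j)) (Fin (D.dim j)) ℂ,
      (∀ x ∈ V.seq k, P * D.rep j x = P) → P = 0) (m : ℕ) :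
    ∃ g : G → ℂ, MemLp g p μ ∧ eLpNorm g p μ ≤ B ∧
      ∀ j, k < D.lvl j → D.lvl j ≤ m → fourierCoef μ g (D.rep j) = fourierCoef μ f (D.rep j) := by
  have : (V.seq m).IsFiniteRelIndex (V.seq k) := Subgroup.isFiniteRelIndex_of_finiteIndex
  obtain ⟨g, hg, hgB, hgf⟩ := exists_memLp_eLpNorm_le_fourierCoef_eq (H := V.seq m) hp hf hB
  exact ⟨g, hg, hgB, fun j hk hm => hgf (D.rep j) (D.rep_continuous j)
    (fun _ => D.rep_eq_one_of_lvl_le hm) (hfix j hk)⟩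

end DualData

theorem first_titchmarsh_tail_estimate_general
    {G : Type*} [Group G] [TopologicalSpace G] [IsTopologicalGroup G]
    [MeasurableSpace G] [BorelSpace G]
    (V : VilenkinData G) (μ : Measure G) [μ.IsHaarMeasure] [IsProbabilityMeasure μ]
    (D : DualData G V μ)
    (p q : ℝ) (hp₁ : 1 < p) (hpq : 1 / p + 1 / q = 1)
    (α : ℝ)
    -- the Hausdorff–Young inequality on `Ĝ`
    (hHY : ∀ g : G → ℂ, MemLp g (ENNReal.ofReal p) μ →
      Summable (fun i => (D.dim i : ℝ) ^ (q * (2 / q - 1 / 2)) *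
        hsNorm (fourierCoef μ g (D.rep i)) ^ q) ∧
      (∑' i, (D.dim i : ℝ) ^ (q * (2 / q - 1 / 2)) * hsNorm (fourierCoef μ g (D.rep i)) ^ q) ≤
        ((eLpNorm g (ENNReal.ofReal p) μ).toReal) ^ q)
    -- Condition (A)
    (hA : ∃ (nn : ℕ) (C : ℝ → ℝ), (∀ q', 1 ≤ q' → 0 < C q') ∧ ∀ k : ℕ, ∃ h : Fin nn → G,
      (∀ i, h i ∈ V.seq k ∧ h i ∉ V.seq (k + 1)) ∧
      ∀ q', 1 ≤ q' → ∀ j : D.ι, k < D.lvl j →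
        ∀ A : Matrix (Fin (D.dim j)) (Fin (D.dim j)) ℂ,
          ((V.seq k).index : ℝ) ^ q' * ((V.seq (D.lvl j)).index : ℝ) ^ (-q') *
              hsNorm A ^ q' ≤
            C q' * ∑ i : Fin nn,
              hsNorm (A * (((D.rep j) (h i) : Matrix (Fin (D.dim j)) (Fin (D.dim j)) ℂ) - 1))
                ^ q')
    (f : G → ℂ) (hf : MemLp f (ENNReal.ofReal p) μ)
    -- `f ∈ Lip_𝒢(α;p)`
    (hLip : ∃ C > (0 : ℝ), ∀ k : ℕ, ∀ h ∈ V.seq k,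
      eLpNorm (fun x => f (h * x) - f x) (ENNReal.ofReal p) μ ≤
        ENNReal.ofReal (C * ((V.seq k).index : ℝ) ^ (-α))) :
    ∃ C > (0 : ℝ), ∀ k : ℕ,
      Summable (fun i : {i // k < D.lvl i} =>
        (D.dim i.1 : ℝ) ^ (q * (2 / q - 1 / 2)) * hsNorm (fourierCoef μ f (D.rep i.1)) ^ q) ∧
      (∑' i : {i // k < D.lvl i},
          (D.dim i.1 : ℝ) ^ (q * (2 / q - 1 / 2)) * hsNorm (fourierCoef μ f (D.rep i.1)) ^ q)
          ^ (1 / q) ≤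
        C * ((V.seq k).index : ℝ) ^ (-α) := by
  obtain ⟨CL, hCL, hLip⟩ := hLip
  obtain ⟨nn, CA, -, hA⟩ := hA
  have hconj : p.HolderConjugate q :=
    Real.holderConjugate_iff.mpr ⟨hp₁, by simpa only [one_div] using hpq⟩
  have hp : 1 ≤ ENNReal.ofReal p := ENNReal.one_le_ofReal.mpr hp₁.le
  let w : (G → ℂ) → D.ι → ℝ := fun g i =>
    (D.dim i : ℝ) ^ (q * (2 / q - 1 / 2)) * hsNorm (fourierCoef μ g (D.rep i)) ^ q
  have hw : ∀ g, 0 ≤ w g := fun g i =>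
    mul_nonneg (Real.rpow_nonneg (Nat.cast_nonneg _) _) (Real.rpow_nonneg (hsNorm_nonneg _) _)
  refine ⟨CL, hCL, fun k => ⟨(hHY f hf).1.subtype _, ?_⟩⟩
  set B := CL * ((V.seq k).index : ℝ) ^ (-α)
  have hB : 0 ≤ B := by positivity
  obtain ⟨h, hmem, hineq⟩ := hA k
  have hpartial (F : Finset {i // k < D.lvl i}) : ∑ i ∈ F, w f i ≤ B ^ q := by
    obtain ⟨g, hg, hgB, hgf⟩ := D.exists_memLp_eLpNorm_le_fourierCoef_eq_of_lvl_le hp hf (hLip k)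
      (fun j hj _ => D.eq_zero_of_forall_mul_rep_eq_self (fun i => (hmem i).1) hconj.symm.pos
        (hineq q hconj.symm.lt.le) hj) (F.sup fun i => D.lvl i)
    calc ∑ i ∈ F, w f i
        = ∑ i ∈ F, w g i := Finset.sum_congr rfl fun i hi => by
          simp only [w, hgf i i.2 (Finset.le_sup (f := fun i => D.lvl i.1) hi)]
      _ ≤ ∑' i : {i // k < D.lvl i}, w g i :=
          Summable.sum_le_tsum _ (fun i _ => hw g i) ((hHY g hg).1.subtype _)
      _ ≤ ∑' i, w g i := Summable.tsum_subtype_le _ _ (hw g) (hHY g hg).1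
      _ ≤ (eLpNorm g (ENNReal.ofReal p) μ).toReal ^ q := (hHY g hg).2
      _ ≤ B ^ q := Real.rpow_le_rpow ENNReal.toReal_nonneg
          (ENNReal.toReal_le_of_le_ofReal hB hgB) hconj.symm.nonneg
  show (∑' i : {i // k < D.lvl i}, w f i) ^ (1 / q) ≤ B
  rw [one_div, Real.rpow_inv_le_iff_of_pos (tsum_nonneg fun i : {i // k < D.lvl i} => hw f i) hB
    hconj.symm.pos]
  exact Real.tsum_le_of_sum_le (fun i => hw f i) hpartial

/-- **First Titchmarsh theorem: tail estimate.** Let `G` be a compact Vilenkin group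
satisfying Condition (A) (hypothesis `hA`), with the Hausdorff–Young inequality `hHY`
available on its dual. If `f ∈ Lip_𝒢(α;p)` with `1 < p ≤ 2`, `1/p + 1/q = 1`,
`0 < α ≤ 1`, then `(∑_{⟨ξ⟩ > |G/G_k|} d_ξ^{q(2/q-1/2)} ‖f̂(ξ)‖_HS^q)^{1/q} = O(|G/G_k|^{-α})`
as `k → ∞`. -/
theorem first_titchmarsh_tail_estimate
    {G : Type*} [Group G] [TopologicalSpace G] [IsTopologicalGroup G] [CompactSpace G]
    [TotallyDisconnectedSpace G] [MeasurableSpace G] [BorelSpace G]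
    (V : VilenkinData G) (μ : Measure G) [μ.IsHaarMeasure] [IsProbabilityMeasure μ]
    (D : DualData G V μ)
    (p q : ℝ) (hp₁ : 1 < p) (hp₂ : p ≤ 2) (hpq : 1 / p + 1 / q = 1)
    (α : ℝ) (hα₀ : 0 < α) (hα₁ : α ≤ 1)
    -- the Hausdorff–Young inequality on `Ĝ`
    (hHY : ∀ g : G → ℂ, MemLp g (ENNReal.ofReal p) μ →
      Summable (fun i => (D.dim i : ℝ) ^ (q * (2 / q - 1 / 2)) *
        hsNorm (fourierCoef μ g (D.rep i)) ^ q) ∧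
      (∑' i, (D.dim i : ℝ) ^ (q * (2 / q - 1 / 2)) * hsNorm (fourierCoef μ g (D.rep i)) ^ q) ≤
        ((eLpNorm g (ENNReal.ofReal p) μ).toReal) ^ q)
    -- Condition (A)
    (hA : ∃ (nn : ℕ) (C : ℝ → ℝ), (∀ q', 1 ≤ q' → 0 < C q') ∧ ∀ k : ℕ, ∃ h : Fin nn → G,
      (∀ i, h i ∈ V.seq k ∧ h i ∉ V.seq (k + 1)) ∧
      ∀ q', 1 ≤ q' → ∀ j : D.ι, k < D.lvl j →
        ∀ A : Matrix (Fin (D.dim j)) (Fin (D.dim j)) ℂ,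
          ((V.seq k).index : ℝ) ^ q' * ((V.seq (D.lvl j)).index : ℝ) ^ (-q') *
              hsNorm A ^ q' ≤
            C q' * ∑ i : Fin nn,
              hsNorm (A * (((D.rep j) (h i) : Matrix (Fin (D.dim j)) (Fin (D.dim j)) ℂ) - 1))
                ^ q')
    (f : G → ℂ) (hf : MemLp f (ENNReal.ofReal p) μ)
    -- `f ∈ Lip_𝒢(α;p)`
    (hLip : ∃ C > (0 : ℝ), ∀ k : ℕ, ∀ h ∈ V.seq k,
      eLpNorm (fun x => f (h * x) - f x) (ENNReal.ofReal p) μ ≤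
        ENNReal.ofReal (C * ((V.seq k).index : ℝ) ^ (-α))) :
    ∃ C > (0 : ℝ), ∀ k : ℕ,
      Summable (fun i : {i // k < D.lvl i} =>
        (D.dim i.1 : ℝ) ^ (q * (2 / q - 1 / 2)) * hsNorm (fourierCoef μ f (D.rep i.1)) ^ q) ∧
      (∑' i : {i // k < D.lvl i},
          (D.dim i.1 : ℝ) ^ (q * (2 / q - 1 / 2)) * hsNorm (fourierCoef μ f (D.rep i.1)) ^ q)
          ^ (1 / q) ≤
        C * ((V.seq k).index : ℝ) ^ (-α) :=
  first_titchmarsh_tail_estimate_general V μ D p q hp₁ hpq α hHY hA f hf hLip
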